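/- Suppose $f, f', f'' : \mathbb{R} \to \mathbb{R}$ exist, are bounded and uniformly continuous on $\mathbb{R}$, and $f$ is integrable. Then $u(x,t) := P_t(f)(x) = \frac{1}{2t} \int_{-\infty}^{+\infty} f(x-v)\, e^{-|v|/t}\, dv$ solves the initial value problem $\frac{\partial u}{\partial t}(x,t) = t^2 \frac{\partial^3 u}{\partial x^2 \partial t}(x,t) + 2t \frac{\partial^2 u}{\partial x^2}(x,t)$ for all $t > 0$, $x \in \mathbb{R}$, together with $\lim_{s \searrow 0} u(x,s) = f(x)$ for every $x \in \mathbb{R}$. -/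

import Mathlib

/-!
Substituting `v = t w` writes `P_t h (x) = ½ ∫ h (x - t w) e^{-|w|} dw`, an expression that is
continuous in `t` up to `t = 0`, where it equals `h x`; this is the initial condition.
Since `(e^{-|w|})'' = e^{-|w|} - 2δ` in the sense of distributions, integrating by parts twice gives
the resolvent identity `P_t f = f + t² P_t f''`, while differentiating under the integral sign
gives `∂ₓ² P_t f = P_t f''`. Differentiating the resolvent identity in `t` yields the equation.
-/

open MeasureTheory Filter

/-- The Picard convolution operator. -/
noncomputable def picardConv (f : ℝ → ℝ) (t x : ℝ) : ℝ :=
  (1 / (2 * t)) * ∫ v : ℝ, f (x - v) * Real.exp (-|v| / t)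

open Set Real Topology

lemma integrable_comp_abs {g : ℝ → ℝ} (hg : IntegrableOn g (Ioi 0)) :
    Integrable (fun w => g |w|) := by
  have hIoi : IntegrableOn (fun w => g |w|) (Ioi 0) :=
    hg.congr_fun (fun w hw => by rw [abs_of_pos hw]) measurableSet_Ioi
  have hIic : IntegrableOn (fun w => g |w|) (Iic 0) := by
    have hneg : MeasurableEmbedding fun w : ℝ => -w := (Homeomorph.neg ℝ).measurableEmbedding
    rw [← Measure.map_neg_eq_self (volume : Measure ℝ), hneg.integrableOn_map_iff]
    simp_rw [Function.comp_def, abs_neg, neg_preimage, neg_Iic, neg_zero]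
    exact (integrableOn_Ici_iff_integrableOn_Ioi).mpr hIoi
  rw [← integrableOn_univ, ← Iic_union_Ioi (a := 0)]
  exact hIic.union hIoi

lemma integrable_exp_neg_abs : Integrable (fun w : ℝ => exp (-|w|)) :=
  integrable_comp_abs (g := fun y => exp (-y)) (by simpa using exp_neg_integrableOn_Ioi 0 one_pos)

lemma integrable_abs_mul_exp_neg_abs : Integrable (fun w : ℝ => |w| * exp (-|w|)) := by
  refine integrable_comp_abs (g := fun y => y * exp (-y)) ?_
  refine (GammaIntegral_convergent two_pos).congr_fun (fun y _ => ?_) measurableSet_Ioi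
  norm_num [mul_comm]

lemma integral_exp_neg_abs : ∫ w : ℝ, exp (-|w|) = 2 := by
  rw [integral_comp_abs (f := fun y => exp (-y)), integral_exp_neg_Ioi_zero, mul_one]

lemma integrable_mul_exp_neg_abs {g : ℝ → ℝ} {M : ℝ} (hg : Measurable g) (hM : ∀ w, |g w| ≤ M) :
    Integrable (fun w => g w * exp (-|w|)) :=
  integrable_exp_neg_abs.bdd_mul hg.aestronglyMeasurable (ae_of_all _ hM)

lemma integrableOn_Ioi_mul_exp_neg {g : ℝ → ℝ} {M : ℝ} (hg : Measurable g)
    (hM : ∀ w, |g w| ≤ M) : IntegrableOn (fun w => g w * exp (-w)) (Ioi 0) :=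
  IntegrableOn.congr_fun ((exp_neg_integrableOn_Ioi 0 one_pos).bdd_mul hg.aestronglyMeasurable
    (ae_of_all _ hM)) (fun w _ => by simp) measurableSet_Ioi

section IntegrationByParts

variable {g g' g'' : ℝ → ℝ} {M₀ M₁ M₂ : ℝ}

lemma integral_Ioi_mul_exp_neg_eq (hg : ∀ w, HasDerivAt g (g' w) w) (hg' : Measurable g')
    (hM₀ : ∀ w, |g w| ≤ M₀) (hM₁ : ∀ w, |g' w| ≤ M₁) :
    ∫ w in Ioi 0, g w * exp (-w) = g 0 + ∫ w in Ioi 0, g' w * exp (-w) := by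
  have hcont : Continuous g := continuous_iff_continuousAt.2 fun w => (hg w).continuousAt
  have hker (w : ℝ) : HasDerivAt (fun w => -exp (-w)) (exp (-w)) w := by
    simpa [Pi.neg_def] using ((hasDerivAt_neg w).exp).neg
  have hzero : Tendsto (g * fun w => -exp (-w)) (𝓝[>] 0) (𝓝 (-g 0)) := by
    have hv : Continuous fun w : ℝ => -exp (-w) := by fun_prop
    simpa using ((hcont.mul hv).tendsto 0).mono_left (nhdsWithin_le_nhds (s := Ioi 0))
  have hinfty : Tendsto (g * fun w => -exp (-w)) atTop (𝓝 0) := by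
    refine squeeze_zero_norm (fun w => ?_)
      (by simpa using tendsto_exp_neg_atTop_nhds_zero.const_mul M₀)
    simpa [abs_mul] using mul_le_mul_of_nonneg_right (hM₀ w) (exp_pos (-w)).le
  have hIBP := integral_Ioi_mul_deriv_eq_deriv_mul (fun w _ => hg w) (fun w _ => hker w)
    (integrableOn_Ioi_mul_exp_neg hcont.measurable hM₀)
    ((integrableOn_Ioi_mul_exp_neg hg' hM₁).neg.congr_fun (fun w _ => by simp)
      measurableSet_Ioi) hzero hinfty
  simp only [mul_neg, integral_neg] at hIBP
  linarith

lemma integral_Ioi_mul_exp_neg_eq_of_deriv_deriv (hg : ∀ w, HasDerivAt g (g' w) w)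
    (hg' : ∀ w, HasDerivAt g' (g'' w) w) (hg'' : Measurable g'') (hM₀ : ∀ w, |g w| ≤ M₀)
    (hM₁ : ∀ w, |g' w| ≤ M₁) (hM₂ : ∀ w, |g'' w| ≤ M₂) :
    ∫ w in Ioi 0, g w * exp (-w) = g 0 + g' 0 + ∫ w in Ioi 0, g'' w * exp (-w) := by
  have hcont' : Continuous g' := continuous_iff_continuousAt.2 fun w => (hg' w).continuousAt
  rw [integral_Ioi_mul_exp_neg_eq hg hcont'.measurable hM₀ hM₁,
    integral_Ioi_mul_exp_neg_eq hg' hg'' hM₁ hM₂, add_assoc]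

lemma integral_mul_exp_neg_abs_eq (hg : Measurable g) (hM₀ : ∀ w, |g w| ≤ M₀) :
    ∫ w, g w * exp (-|w|) =
      (∫ w in Ioi 0, g w * exp (-w)) + ∫ w in Ioi 0, g (-w) * exp (-w) := by
  have hint := integrable_mul_exp_neg_abs hg hM₀
  rw [← intervalIntegral.integral_Iic_add_Ioi hint.integrableOn hint.integrableOn, add_comm]
  congr 1
  · exact setIntegral_congr_fun measurableSet_Ioi fun w hw => by rw [abs_of_pos hw]
  · have hflip := integral_comp_neg_Ioi 0 fun w => g w * exp (-|w|)
    rw [neg_zero] at hflip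
    rw [← hflip]
    exact setIntegral_congr_fun measurableSet_Ioi fun w hw => by
      rw [abs_neg, abs_of_pos hw]

lemma integral_deriv_deriv_mul_exp_neg_abs (hg : ∀ w, HasDerivAt g (g' w) w)
    (hg' : ∀ w, HasDerivAt g' (g'' w) w) (hg'' : Measurable g'') (hM₀ : ∀ w, |g w| ≤ M₀)
    (hM₁ : ∀ w, |g' w| ≤ M₁) (hM₂ : ∀ w, |g'' w| ≤ M₂) :
    ∫ w, g'' w * exp (-|w|) = (∫ w, g w * exp (-|w|)) - 2 * g 0 := by
  have hcont : Continuous g := continuous_iff_continuousAt.2 fun w => (hg w).continuousAt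
  have hreflect := integral_Ioi_mul_exp_neg_eq_of_deriv_deriv (g := fun w => g (-w))
    (g' := fun w => -g' (-w)) (g'' := fun w => g'' (-w))
    (fun w => by simpa [Function.comp_def] using (hg (-w)).comp w (hasDerivAt_neg w))
    (fun w => by
      simpa [Function.comp_def, Pi.neg_def] using ((hg' (-w)).comp w (hasDerivAt_neg w)).neg)
    (hg''.comp measurable_neg) (fun w => hM₀ (-w)) (fun w => by simpa using hM₁ (-w))
    (fun w => hM₂ (-w))
  rw [integral_mul_exp_neg_abs_eq hg'' hM₂, integral_mul_exp_neg_abs_eq hcont.measurable hM₀,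
    integral_Ioi_mul_exp_neg_eq_of_deriv_deriv hg hg' hg'' hM₀ hM₁ hM₂, hreflect]
  simp only [neg_zero]
  ring

end IntegrationByParts

/-- `picardConv h t` after the substitution `v = t * w`, which is valid for `t > 0`; unlike
`picardConv`, it extends continuously to `t = 0`. -/
noncomputable def rescaledPicard (h : ℝ → ℝ) (t x : ℝ) : ℝ :=
  (∫ w, h (x - t * w) * exp (-|w|)) / 2

lemma picardConv_eq_rescaledPicard (h : ℝ → ℝ) {t : ℝ} (ht : 0 < t) :
    picardConv h t = rescaledPicard h t := by
  funext x
  have hsubst := Measure.integral_comp_mul_left (fun v => h (x - v) * exp (-|v| / t)) t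
  have hker (w : ℝ) : exp (-|t * w| / t) = exp (-|w|) := by
    rw [abs_mul, abs_of_pos ht]
    field_simp
  simp only [hker, abs_inv, abs_of_pos ht, smul_eq_mul] at hsubst
  rw [picardConv, rescaledPicard, hsubst]
  field_simp

lemma rescaledPicard_zero (h : ℝ → ℝ) (x : ℝ) : rescaledPicard h 0 x = h x := by
  simp [rescaledPicard, integral_const_mul, integral_exp_neg_abs]

section RescaledPicard

variable {h h' h'' : ℝ → ℝ} {M₀ M₁ M₂ : ℝ}

lemma continuous_rescaledPicard (hh : Continuous h) (hM₀ : ∀ y, |h y| ≤ M₀) (x : ℝ) :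
    Continuous fun t => rescaledPicard h t x := by
  refine (continuous_of_dominated (bound := fun w => M₀ * exp (-|w|))
    (fun t => (integrable_mul_exp_neg_abs (by fun_prop) fun w => hM₀ _).aestronglyMeasurable)
    (fun t => ae_of_all _ fun w => ?_) (integrable_exp_neg_abs.const_mul M₀)
    (ae_of_all _ fun w => by fun_prop)).div_const 2
  simpa [abs_mul] using mul_le_mul_of_nonneg_right (hM₀ (x - t * w)) (exp_pos _).le

lemma differentiable_rescaledPicard (hh : ∀ y, HasDerivAt h (h' y) y) (hh' : Measurable h')
    (hM₀ : ∀ y, |h y| ≤ M₀) (hM₁ : ∀ y, |h' y| ≤ M₁) (x : ℝ) :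
    Differentiable ℝ fun t => rescaledPicard h t x := by
  have hcont : Continuous h := continuous_iff_continuousAt.2 fun y => (hh y).continuousAt
  intro t
  refine ((hasDerivAt_integral_of_dominated_loc_of_deriv_le
    (F' := fun t w => h' (x - t * w) * -w * exp (-|w|))
    (bound := fun w => M₁ * (|w| * exp (-|w|))) univ_mem
    (Eventually.of_forall fun s =>
      (integrable_mul_exp_neg_abs (by fun_prop) fun w => hM₀ _).aestronglyMeasurable)
    (integrable_mul_exp_neg_abs (by fun_prop) fun w => hM₀ _) ?_ ?_
    (integrable_abs_mul_exp_neg_abs.const_mul M₁) ?_).2.differentiableAt).div_const 2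
  · exact (by fun_prop : Measurable fun w => h' (x - t * w) * -w * exp (-|w|)).aestronglyMeasurable
  · refine ae_of_all _ fun w s _ => ?_
    simpa [abs_mul, mul_assoc] using
      mul_le_mul_of_nonneg_right (hM₁ (x - s * w)) (by positivity : 0 ≤ |w| * exp (-|w|))
  · refine ae_of_all _ fun w s _ => ?_
    have hin : HasDerivAt (fun s => x - s * w) (-w) s := by
      simpa using ((hasDerivAt_id s).mul_const w).const_sub x
    exact ((hh _).comp s hin).mul_const _

lemma hasDerivAt_rescaledPicard (hh : ∀ y, HasDerivAt h (h' y) y) (hh' : Measurable h')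
    (hM₀ : ∀ y, |h y| ≤ M₀) (hM₁ : ∀ y, |h' y| ≤ M₁) (t x : ℝ) :
    HasDerivAt (rescaledPicard h t) (rescaledPicard h' t x) x := by
  have hcont : Continuous h := continuous_iff_continuousAt.2 fun y => (hh y).continuousAt
  refine ((hasDerivAt_integral_of_dominated_loc_of_deriv_le
    (F' := fun y w => h' (y - t * w) * exp (-|w|))
    (bound := fun w => M₁ * exp (-|w|)) univ_mem
    (Eventually.of_forall fun y =>
      (integrable_mul_exp_neg_abs (by fun_prop) fun w => hM₀ _).aestronglyMeasurable)
    (integrable_mul_exp_neg_abs (by fun_prop) fun w => hM₀ _)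
    (integrable_mul_exp_neg_abs (by fun_prop) fun w => hM₁ _).aestronglyMeasurable ?_
    (integrable_exp_neg_abs.const_mul M₁) ?_).2).div_const 2
  · refine ae_of_all _ fun w y _ => ?_
    simpa [abs_mul] using mul_le_mul_of_nonneg_right (hM₁ (y - t * w)) (exp_pos _).le
  · refine ae_of_all _ fun w y _ => ?_
    simpa [Function.comp_def] using
      ((hh (y - t * w)).comp y ((hasDerivAt_id y).sub_const (t * w))).mul_const (exp (-|w|))

lemma rescaledPicard_eq_add_sq_mul (hh : ∀ y, HasDerivAt h (h' y) y)
    (hh' : ∀ y, HasDerivAt h' (h'' y) y) (hh'' : Measurable h'') (hM₀ : ∀ y, |h y| ≤ M₀)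
    (hM₁ : ∀ y, |h' y| ≤ M₁) (hM₂ : ∀ y, |h'' y| ≤ M₂) (t x : ℝ) :
    rescaledPicard h t x = h x + t ^ 2 * rescaledPicard h'' t x := by
  have hin (w : ℝ) : HasDerivAt (fun w => x - t * w) (-t) w := by
    simpa using ((hasDerivAt_id w).const_mul t).const_sub x
  have key := integral_deriv_deriv_mul_exp_neg_abs (g := fun w => h (x - t * w))
    (g' := fun w => -t * h' (x - t * w)) (g'' := fun w => t ^ 2 * h'' (x - t * w))
    (fun w => by simpa [Function.comp_def, mul_comm] using (hh _).comp w (hin w))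
    (fun w => by
      simpa [Function.comp_def, sq, mul_assoc, mul_comm] using ((hh' _).comp w (hin w)).const_mul (-t))
    (by fun_prop) (fun w => hM₀ _)
    (fun w => by simpa [abs_mul] using mul_le_mul_of_nonneg_left (hM₁ (x - t * w)) (abs_nonneg t))
    (fun w => by simpa [abs_mul] using mul_le_mul_of_nonneg_left (hM₂ (x - t * w)) (sq_nonneg t))
  simp only [mul_assoc, integral_const_mul, mul_zero, sub_zero] at key
  rw [rescaledPicard, rescaledPicard]
  linarith

end RescaledPicard

lemma deriv_eq_of_eq_add_sq_mul {u g : ℝ → ℝ} {c t : ℝ} (ht : t ≠ 0) (hu : DifferentiableAt ℝ u t)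
    (hug : ∀ s, u s = c + s ^ 2 * g s) :
    deriv u t = t ^ 2 * deriv g t + 2 * t * g t := by
  have hg_eq : (fun s => (u s - c) / s ^ 2) =ᶠ[𝓝 t] g := by
    filter_upwards [eventually_ne_nhds ht] with s hs
    rw [hug]
    field_simp
    ring
  have hg : DifferentiableAt ℝ g t :=
    ((hu.sub_const c).div (differentiableAt_pow 2) (pow_ne_zero 2 ht)).congr_of_eventuallyEq
      hg_eq.symm
  rw [funext hug, (((hasDerivAt_pow 2 t).fun_mul hg.hasDerivAt).const_add c).deriv]
  push_cast
  ring

lemma iteratedDeriv_two_rescaledPicard {f : ℝ → ℝ} {M₀ M₁ M₂ : ℝ} (hf : Differentiable ℝ f)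
    (hf' : Differentiable ℝ (deriv f)) (hM₀ : ∀ y, |f y| ≤ M₀) (hM₁ : ∀ y, |deriv f y| ≤ M₁)
    (hM₂ : ∀ y, |deriv (deriv f) y| ≤ M₂) (t x : ℝ) :
    iteratedDeriv 2 (rescaledPicard f t) x = rescaledPicard (deriv (deriv f)) t x := by
  have hfirst : deriv (rescaledPicard f t) = rescaledPicard (deriv f) t := funext fun y =>
    (hasDerivAt_rescaledPicard (fun y => (hf y).hasDerivAt) (measurable_deriv f) hM₀ hM₁ t y).deriv
  rw [iteratedDeriv_succ, iteratedDeriv_one, hfirst]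
  exact (hasDerivAt_rescaledPicard (fun y => (hf' y).hasDerivAt) (measurable_deriv _) hM₁ hM₂
    t x).deriv

theorem picard_ivp_general
    (f : ℝ → ℝ)
    (hf_diff : ∀ i < 2, Differentiable ℝ (iteratedDeriv i f))
    (hf_bdd : ∀ i ≤ 2, ∃ M : ℝ, ∀ x : ℝ, |iteratedDeriv i f x| ≤ M) :
    (∀ t > (0 : ℝ), ∀ x : ℝ,
        deriv (fun s => picardConv f s x) t =
          t ^ 2 * deriv (fun s => iteratedDeriv 2 (fun y => picardConv f s y) x) t +
            2 * t * iteratedDeriv 2 (fun y => picardConv f t y) x) ∧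
      (∀ x : ℝ, Tendsto (fun s : ℝ => picardConv f s x)
        (nhdsWithin 0 (Set.Ioi 0)) (nhds (f x))) := by
  have hf : Differentiable ℝ f := by simpa using hf_diff 0 (by norm_num)
  have hf' : Differentiable ℝ (deriv f) := by simpa using hf_diff 1 (by norm_num)
  obtain ⟨M₀, hM₀⟩ : ∃ M, ∀ x, |f x| ≤ M := by simpa using hf_bdd 0 (by norm_num)
  obtain ⟨M₁, hM₁⟩ : ∃ M, ∀ x, |deriv f x| ≤ M := by simpa using hf_bdd 1 (by norm_num)
  obtain ⟨M₂, hM₂⟩ : ∃ M, ∀ x, |deriv (deriv f) x| ≤ M := by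
    simpa [iteratedDeriv_succ] using hf_bdd 2 le_rfl
  have hxx := iteratedDeriv_two_rescaledPicard hf hf' hM₀ hM₁ hM₂
  refine ⟨fun t ht x => ?_, fun x => ?_⟩
  · have hnear : ∀ᶠ s in 𝓝 t, picardConv f s = rescaledPicard f s :=
      eventually_gt_nhds ht |>.mono fun s hs => picardConv_eq_rescaledPicard f hs
    have hu : (fun s => picardConv f s x) =ᶠ[𝓝 t] fun s => rescaledPicard f s x :=
      hnear.mono fun s hs => congrFun hs x
    have hu'' : (fun s => iteratedDeriv 2 (fun y => picardConv f s y) x) =ᶠ[𝓝 t]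
        fun s => rescaledPicard (deriv (deriv f)) s x :=
      hnear.mono fun s hs => by simp only [hs, hxx]
    rw [picardConv_eq_rescaledPicard f ht, hxx, hu.deriv_eq, hu''.deriv_eq]
    exact deriv_eq_of_eq_add_sq_mul ht.ne'
      (differentiable_rescaledPicard (fun y => (hf y).hasDerivAt) (measurable_deriv f) hM₀ hM₁ x t)
      fun s => rescaledPicard_eq_add_sq_mul (fun y => (hf y).hasDerivAt)
        (fun y => (hf' y).hasDerivAt) (measurable_deriv _) hM₀ hM₁ hM₂ s x
  · have hlim := (continuous_rescaledPicard hf.continuous hM₀ x).tendsto 0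
    rw [rescaledPicard_zero] at hlim
    refine (hlim.mono_left nhdsWithin_le_nhds).congr' ?_
    filter_upwards [self_mem_nhdsWithin] with s hs
    rw [picardConv_eq_rescaledPicard f hs]

theorem picard_ivp
    (f : ℝ → ℝ)
    (hf_diff : ∀ i < 2, Differentiable ℝ (iteratedDeriv i f))
    (hf_bdd : ∀ i ≤ 2, ∃ M : ℝ, ∀ x : ℝ, |iteratedDeriv i f x| ≤ M)
    (hf_uc : ∀ i ≤ 2, UniformContinuous (iteratedDeriv i f))
    (hf_int : Integrable f) :
    (∀ t > (0 : ℝ), ∀ x : ℝ,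
        deriv (fun s => picardConv f s x) t =
          t ^ 2 * deriv (fun s => iteratedDeriv 2 (fun y => picardConv f s y) x) t +
            2 * t * iteratedDeriv 2 (fun y => picardConv f t y) x) ∧
      (∀ x : ℝ, Tendsto (fun s : ℝ => picardConv f s x)
        (nhdsWithin 0 (Set.Ioi 0)) (nhds (f x))) :=
  picard_ivp_general f hf_diff hf_bdd
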